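/- arXiv:1311.1393 — 2 statements merged into one kernel-verified Lean document; each statement's English description precedes it below -/
import Mathlib

section
/- Let s > 0, r > 0, 1 ≤ p ≤ ∞, and let B be a nontrivial closed ball in X (possibly B = X). Then the Sobolev ball W̄^s_r(L_p(B)) is a compact subset of L_p(B). -/
open MeasureTheory ENNReal

noncomputable section

/-- A diffusion measure space: a quasi-metric space with a Borel probability measure,
an orthonormal system of continuous functions with associated nondecreasing "eigenvalues",
satisfying Gaussian upper and lower bounds for the generalized heat kernel. -/
structure DiffusionSetting (X : Type*) [TopologicalSpace X] [MeasurableSpace X]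
    [BorelSpace X] where
  /-- the quasi-metric -/
  rho : X → X → ℝ
  rho_nonneg : ∀ x y, 0 ≤ rho x y
  rho_symm : ∀ x y, rho x y = rho y x
  rho_eq_zero_iff : ∀ x y, rho x y = 0 ↔ x = y
  /-- quasi-triangle constant -/
  Kq : ℝ
  one_le_Kq : 1 ≤ Kq
  rho_quasi_triangle : ∀ x y z, rho x z ≤ Kq * (rho x y + rho y z)
  /-- the Borel probability measure -/
  μ : Measure X
  μ_prob : IsProbabilityMeasure μ
  /-- the orthonormal system -/
  phi : ℕ → X → ℝ
  phi_cont : ∀ k, Continuous (phi k)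
  phi_zero_eq_one : ∀ x, phi 0 x = 1
  phi_orthonormal : ∀ j k, ∫ x, phi j x * phi k x ∂μ = if j = k then 1 else 0
  phi_complete : ∀ f : X → ℝ, MemLp f 2 μ → (∀ k, ∫ x, f x * phi k x ∂μ = 0) → f =ᵐ[μ] 0
  /-- the eigenvalues -/
  lam : ℕ → ℝ
  lam_zero : lam 0 = 0
  lam_mono : Monotone lam
  lam_tendsto : Filter.Tendsto lam Filter.atTop Filter.atTop
  /-- the "dimension" of the space -/
  alp : ℝ
  alp_pos : 0 < alp
  /-- the generalized heat kernel converges absolutely -/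
  heat_abs_conv : ∀ t : ℝ, 0 < t → ∀ x y : X,
    Summable fun k => |Real.exp (-(lam k) ^ 2 * t) * phi k x * phi k y|
  cball_compact : ∀ (x : X) (t : ℝ), 0 < t → IsCompact {y | rho x y ≤ t}
  /-- ball volume constant -/
  Cb : ℝ
  ball_vol_le : ∀ (x : X) (t : ℝ), 0 < t → μ {y | rho x y ≤ t} ≤ ENNReal.ofReal (Cb * t ^ alp)
  /-- Gaussian upper bound constants -/
  Cu : ℝ
  cu : ℝ
  cu_pos : 0 < cu
  heat_upper : ∀ t : ℝ, 0 < t → t ≤ 1 → ∀ x y : X,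
    |∑' k, Real.exp (-(lam k) ^ 2 * t) * phi k x * phi k y| ≤
      Cu * t ^ (-(alp / 2)) * Real.exp (-(cu * (rho x y) ^ 2) / t)
  /-- heat kernel lower bound constant -/
  Cl : ℝ
  heat_lower : ∀ t : ℝ, 0 < t → t < 1 → ∀ x : X,
    t ^ (-(alp / 2)) ≤ Cl * ∑' k, Real.exp (-(lam k) ^ 2 * t) * phi k x * phi k x

variable {X : Type*} [TopologicalSpace X] [MeasurableSpace X] [BorelSpace X]

namespace DiffusionSetting

/-- closed ball of the quasi-metric -/
def cball (D : DiffusionSetting X) (x : X) (t : ℝ) : Set X := {y | D.rho x y ≤ t}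

/-- open ball of the quasi-metric -/
def oball (D : DiffusionSetting X) (x : X) (t : ℝ) : Set X := {y | D.rho x y < t}

/-- the space `Π_N` of diffusion polynomials of degree at most `N` -/
def Poly (D : DiffusionSetting X) (N : ℝ) : Submodule ℝ (X → ℝ) :=
  Submodule.span ℝ (D.phi '' {k | D.lam k ≤ N})

/-- best approximation error `E(f, Π_N, L_p(B))` -/
def E (D : DiffusionSetting X) (p : ℝ≥0∞) (B : Set X) (N : ℝ) (f : X → ℝ) : ℝ≥0∞ :=
  ⨅ P : D.Poly N, eLpNorm (f - (P : X → ℝ)) p (D.μ.restrict B)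

/-- the Sobolev norm `‖f‖_{W^s(L_p(B))}` (with values in `ℝ≥0∞`); the supremum over
integers `N ≥ 1` is realized as a supremum over all of `ℕ` since the term at `N = 0`
vanishes for `s > 0`. -/
def sobNorm (D : DiffusionSetting X) (s : ℝ) (p : ℝ≥0∞) (B : Set X) (f : X → ℝ) : ℝ≥0∞ :=
  eLpNorm f p (D.μ.restrict B) + ⨆ N : ℕ, ENNReal.ofReal ((N : ℝ) ^ s) * D.E p B (N : ℝ) f

/-- membership in the Sobolev space `W^s(L_p(B))` -/
def MemSob (D : DiffusionSetting X) (s : ℝ) (p : ℝ≥0∞) (B : Set X) (f : X → ℝ) : Prop :=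
  MemLp f p (D.μ.restrict B) ∧ D.sobNorm s p B f ≠ ⊤

/-- the Sobolev ball `W̄^s_r(L_p(B))` -/
def sobBall (D : DiffusionSetting X) (s : ℝ) (p : ℝ≥0∞) (B : Set X) (r : ℝ) : Set (X → ℝ) :=
  {f | MemLp f p (D.μ.restrict B) ∧ D.sobNorm s p B f ≤ ENNReal.ofReal r}

/-- membership in `X_p(X)`, the `L_p`-closure of the diffusion polynomials -/
def MemXp (D : DiffusionSetting X) (p : ℝ≥0∞) (f : X → ℝ) : Prop :=
  MemLp f p D.μ ∧
    ∀ ε : ℝ, 0 < ε → ∃ N : ℝ, ∃ P ∈ D.Poly N, eLpNorm (f - P) p D.μ ≤ ENNReal.ofReal ε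

/-- membership in `C^∞(X) = ∩_{s>0} W^s(L_∞(X))` -/
def MemCinf (D : DiffusionSetting X) (g : X → ℝ) : Prop :=
  ∀ s : ℝ, 0 < s → D.MemSob s ⊤ Set.univ g

/-- `μ` as a signed measure -/
def muSigned (D : DiffusionSetting X) : SignedMeasure X :=
  haveI := D.μ_prob
  D.μ.toSignedMeasure

end DiffusionSetting

/-- the strong product assumption with constant `a` -/
def StrongProduct (D : DiffusionSetting X) (a : ℝ) : Prop :=
  0 < a ∧ ∀ (N : ℝ) (f g : X → ℝ), f ∈ D.Poly N → g ∈ D.Poly N → f * g ∈ D.Poly (a * N)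

/-- integral of `f` with respect to a signed measure (via the Jordan decomposition) -/
def sInt {Y : Type*} [MeasurableSpace Y] (ν : SignedMeasure Y) (f : Y → ℝ) : ℝ :=
  ∫ x, f x ∂ν.toJordanDecomposition.posPart - ∫ x, f x ∂ν.toJordanDecomposition.negPart

/-- integral of `f` over a set `A` with respect to a signed measure -/
def sIntOn {Y : Type*} [MeasurableSpace Y] (ν : SignedMeasure Y) (A : Set Y) (f : Y → ℝ) : ℝ :=
  ∫ x in A, f x ∂ν.toJordanDecomposition.posPart -
    ∫ x in A, f x ∂ν.toJordanDecomposition.negPart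

/-- the total variation measure `|ν|` of a signed measure -/
def absMeas {Y : Type*} [MeasurableSpace Y] (ν : SignedMeasure Y) : Measure Y :=
  ν.totalVariation

/-- a low-pass filter: infinitely differentiable, nonincreasing on `[0,∞)`,
equal to `1` on `[0,1/2]` and to `0` on `[1,∞)` -/
structure IsLowPass (H : ℝ → ℝ) : Prop where
  smooth : ∀ n : ℕ, ContDiff ℝ n H
  antitoneOn : AntitoneOn H (Set.Ici 0)
  eq_one : ∀ t : ℝ, 0 ≤ t → t ≤ 1 / 2 → H t = 1
  eq_zero : ∀ t : ℝ, 1 ≤ t → H t = 0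

namespace DiffusionSetting

/-- the localized kernel `K_N(x,y) = Σ_k H(λ_k/(2N)) φ_k(x) φ_k(y)` -/
def kernK (D : DiffusionSetting X) (H : ℝ → ℝ) (N : ℝ) (x y : X) : ℝ :=
  ∑' k, H (D.lam k / (2 * N)) * D.phi k x * D.phi k y

/-- the approximation operator `σ_N(f,ν) = ∫ f(y) K_N(·,y) dν(y)` -/
def sigmaOp (D : DiffusionSetting X) (H : ℝ → ℝ) (N : ℝ) (ν : SignedMeasure X)
    (f : X → ℝ) : X → ℝ :=
  fun x => sInt ν fun y => f y * D.kernK H N x y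

/-- `τ_N(f,ν) = σ_N(f,ν) − σ_{N/2}(f,ν)` -/
def tauOp (D : DiffusionSetting X) (H : ℝ → ℝ) (N : ℝ) (ν : SignedMeasure X)
    (f : X → ℝ) : X → ℝ :=
  fun x => D.sigmaOp H N ν f x - D.sigmaOp H (N / 2) ν f x

/-- the quantization `I_N(f,ν,y) = ⌊N^S σ_N(f,ν)(y)⌋` -/
def quantI (D : DiffusionSetting X) (H : ℝ → ℝ) (S N : ℝ) (ν : SignedMeasure X)
    (f : X → ℝ) (y : X) : ℤ :=
  ⌊N ^ S * D.sigmaOp H N ν f y⌋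

/-- the quantized approximation operator
`σ°_N(f,νm,νq,A) = N^{-S} ∫_A I_N(f,νm,y) K_N(·,y) dνq(y)` -/
def sigmaCirc (D : DiffusionSetting X) (H : ℝ → ℝ) (S N : ℝ) (νm νq : SignedMeasure X)
    (A : Set X) (f : X → ℝ) : X → ℝ :=
  fun x => N ^ (-S) * sIntOn νq A fun y => (D.quantI H S N νm f y : ℝ) * D.kernK H N x y

/-- `ν` is a quadrature (exactness) rule on `Π_M` -/
def IsExactOn (D : DiffusionSetting X) (ν : SignedMeasure X) (M : ℝ) : Prop :=
  ∀ f ∈ D.Poly M, sInt ν f = ∫ x, f x ∂D.μ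

/-- uniform family of Marcinkiewicz–Zygmund measures of order `2^n` for exponent `p` -/
def UniformMZFamily (D : DiffusionSetting X) (a : ℝ) (p : ℝ≥0∞)
    (ν : ℕ → SignedMeasure X) : Prop :=
  ∃ c₁ c₂ : ℝ, 0 < c₁ ∧ 0 < c₂ ∧ ∀ n : ℕ, ∀ f ∈ D.Poly (a * 2 ^ n),
    ENNReal.ofReal c₁ * eLpNorm f p D.μ ≤ eLpNorm f p (absMeas (ν n)) ∧
    eLpNorm f p (absMeas (ν n)) ≤ ENNReal.ofReal c₂ * eLpNorm f p D.μ

/-- family of quadrature measures, exact on `Π_{b·2^n}` respectively -/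
def QuadFamily (D : DiffusionSetting X) (b : ℝ) (ν : ℕ → SignedMeasure X) : Prop :=
  ∀ n : ℕ, D.IsExactOn (ν n) (b * 2 ^ n)

/-- the standing convention: for `p = ∞`, `(μ_N)` is a uniform family of MZ quadrature
measures of order `N = 2^n`; for `p < ∞`, `μ_N = μ`. -/
def StandingConvention (D : DiffusionSetting X) (a : ℝ) (p : ℝ≥0∞)
    (m : ℕ → SignedMeasure X) : Prop :=
  (p = ⊤ → D.UniformMZFamily a p m ∧ D.QuadFamily a m) ∧
  (p ≠ ⊤ → ∀ n : ℕ, m n = D.muSigned)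

/-- the local Sobolev norm `‖f‖_{W^s(L_p(X),B)}`, with the supremum over dyadic `N ≥ 2` -/
def sobNormLoc (D : DiffusionSetting X) (H : ℝ → ℝ) (m : ℕ → SignedMeasure X) (s : ℝ)
    (p : ℝ≥0∞) (B : Set X) (f : X → ℝ) : ℝ≥0∞ :=
  eLpNorm f p D.μ + ⨆ n : ℕ, ENNReal.ofReal (((2 : ℝ) ^ (n + 1)) ^ s) *
    eLpNorm (D.tauOp H (2 ^ (n + 1)) (m (n + 1)) f) p (D.μ.restrict B)

/-- the cut-off Sobolev norm `‖f‖_{W^s(L_p(X),φ)}` -/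
def sobNormPhi (D : DiffusionSetting X) (s : ℝ) (p : ℝ≥0∞) (g f : X → ℝ) : ℝ≥0∞ :=
  eLpNorm f p D.μ + ⨆ N : ℕ, ENNReal.ofReal ((N : ℝ) ^ s) * D.E p Set.univ (N : ℝ) (f * g)

/-- membership in the local Sobolev space `W^s(L_p(X),x)` at a point `x` -/
def MemLocalSob (D : DiffusionSetting X) (s : ℝ) (p : ℝ≥0∞) (x : X) (f : X → ℝ) : Prop :=
  D.MemXp p f ∧ ∃ t : ℝ, 0 < t ∧ ∀ g : X → ℝ, D.MemCinf g →
    Function.support g ⊆ D.oball x t → D.MemSob s p Set.univ (f * g)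

end DiffusionSetting

/-- the smooth cut-off property -/
def SmoothCutoff (D : DiffusionSetting X) : Prop :=
  ∀ (x : X) (t' t : ℝ), 0 < t' → t' < t →
    ∃ g : X → ℝ, D.MemCinf g ∧ (∀ y, D.rho x y ≤ t' → g y = 1) ∧
      ∀ y, t < D.rho x y → g y = 0

/-- `(ν_n)` is finitely supported, with `#supp(ν_n) ≤ C (2^n)^a` -/
def FiniteSupportBound {Y : Type*} [MeasurableSpace Y] (ν : ℕ → SignedMeasure Y)
    (C a : ℝ) : Prop :=
  ∀ n : ℕ, ∃ T : Finset Y, absMeas (ν n) (↑T)ᶜ = 0 ∧ (T.card : ℝ) ≤ C * ((2 : ℝ) ^ n) ^ a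

/-- the Kolmogorov `n`-width of `Y` in `Z` -/
def kolmogorovWidth (Z : Type*) [NormedAddCommGroup Z] [NormedSpace ℝ Z] (n : ℕ)
    (Y : Set Z) : ℝ≥0∞ :=
  ⨅ L : {L : Submodule ℝ Z // FiniteDimensional ℝ L ∧ Module.finrank ℝ L = n},
    ⨆ y ∈ Y, ⨅ x : L.1, edist y x

/-- the linear `n`-width of `Y` in `Z` -/
def linearWidth (Z : Type*) [NormedAddCommGroup Z] [NormedSpace ℝ Z] (n : ℕ)
    (Y : Set Z) : ℝ≥0∞ :=
  ⨅ F : {F : Z →L[ℝ] Z // FiniteDimensional ℝ (LinearMap.range (F : Z →ₗ[ℝ] Z)) ∧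
      Module.finrank ℝ (LinearMap.range (F : Z →ₗ[ℝ] Z)) ≤ n},
    ⨆ y ∈ Y, edist y (F.1 y)

/-- the Gelfand `n`-width of `Y` in `Z` -/
def gelfandWidth (Z : Type*) [NormedAddCommGroup Z] [NormedSpace ℝ Z] (n : ℕ)
    (Y : Set Z) : ℝ≥0∞ :=
  ⨅ V : {V : Submodule ℝ Z // IsClosed (V : Set Z) ∧ ∃ W : Submodule ℝ Z,
      FiniteDimensional ℝ W ∧ Module.finrank ℝ W ≤ n ∧ V ⊔ W = ⊤},
    ⨆ y ∈ Y ∩ (V.1 : Set Z), edist y 0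

/-- the Bernstein `n`-width of `Y` in `Z` -/
def bernsteinWidth (Z : Type*) [NormedAddCommGroup Z] [NormedSpace ℝ Z] (n : ℕ)
    (Y : Set Z) : ℝ≥0∞ :=
  ⨆ W : {W : Submodule ℝ Z // ∃ V : Submodule ℝ Z, V ≤ W ∧ FiniteDimensional ℝ V ∧
      Module.finrank ℝ V = n + 1},
    sSup (ENNReal.ofReal '' {t : ℝ | 0 ≤ t ∧ ∀ w : Z, w ∈ W.1 → ‖w‖ ≤ 1 → t • w ∈ Y})

/-!
The continuous `φ_k` lie in `L_p(B)` because `B` is compact, so `Π_N` becomes a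
finite-dimensional subspace `V_N` of `L_p(B)` and `E(f, Π_N, L_p(B))` is the distance from `f`
to `V_N`. A function in the Sobolev ball has norm at most `r` and lies within `r N^{-s}` of
`V_N` for every `N`, so the ball is totally bounded; it is closed as a sublevel set of a supremum
of continuous functions, hence compact in the complete space `L_p(B)`.
-/

section Approximation

open Filter Topology Metric

variable {E : Type*} [NormedAddCommGroup E]

theorem isClosed_setOf_enorm_add_iSup_mul_infEDist_le (A : ℕ → Set E) (w : ℕ → ℝ≥0∞)
    (hw : ∀ n, w n ≠ ∞) (R : ℝ≥0∞) :
    IsClosed {F : E | ‖F‖ₑ + ⨆ n, w n * infEDist F (A n) ≤ R} := by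
  simp only [ENNReal.add_iSup, iSup_le_iff, Set.ofPred_forall]
  exact isClosed_iInter fun n => isClosed_le
    (continuous_enorm.add ((ENNReal.continuous_const_mul (hw n)).comp continuous_infEDist))
    continuous_const

variable [NormedSpace ℝ E]

theorem totallyBounded_of_isBounded_of_approx_finiteDimensional {S : Set E}
    (hS : Bornology.IsBounded S)
    (happrox : ∀ ε > 0, ∃ V : Submodule ℝ E, FiniteDimensional ℝ V ∧
      ∀ F ∈ S, ∃ Q ∈ V, dist F Q < ε) :
    TotallyBounded S := by
  rw [Metric.totallyBounded_iff]
  intro ε hε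
  obtain ⟨V, hVfin, hV⟩ := happrox (ε / 2) (half_pos hε)
  obtain ⟨R, hR⟩ := hS.subset_closedBall 0
  -- the approximants of points of `S` lie in a compact ball of `V`
  have hC : IsCompact (Subtype.val '' closedBall (0 : V) (R + ε / 2)) :=
    (isCompact_closedBall _ _).image continuous_subtype_val
  obtain ⟨t, ht, hcover⟩ :=
    Metric.totallyBounded_iff.mp hC.totallyBounded (ε / 2) (half_pos hε)
  refine ⟨t, ht, fun F hF => ?_⟩
  obtain ⟨Q, hQV, hFQ⟩ := hV F hF
  have hQ : Q ∈ Subtype.val '' closedBall (0 : V) (R + ε / 2) := by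
    refine ⟨⟨Q, hQV⟩, ?_, rfl⟩
    have hF : ‖F‖ ≤ R := mem_closedBall_zero_iff.mp (hR hF)
    rw [mem_closedBall_zero_iff, Submodule.coe_norm]
    linarith [norm_le_norm_add_norm_sub' Q F, norm_sub_rev Q F, dist_eq_norm F Q]
  obtain ⟨y, hyt, hQy⟩ := Set.mem_iUnion₂.mp (hcover hQ)
  refine Set.mem_iUnion₂.mpr ⟨y, hyt, ?_⟩
  rw [mem_ball] at hQy ⊢
  linarith [dist_triangle F Q y]

theorem isCompact_setOf_enorm_add_iSup_mul_infEDist_le [CompleteSpace E]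
    (V : ℕ → Submodule ℝ E) [∀ n, FiniteDimensional ℝ (V n)] {w : ℕ → ℝ≥0∞}
    (hw : ∀ n, w n ≠ ∞) (hw_top : Tendsto w atTop (𝓝 ∞)) {R : ℝ≥0∞} (hR : R ≠ ∞) :
    IsCompact {F : E | ‖F‖ₑ + ⨆ n, w n * infEDist F (V n : Set E) ≤ R} := by
  set S := {F : E | ‖F‖ₑ + ⨆ n, w n * infEDist F (V n : Set E) ≤ R}
  have hS_bdd : Bornology.IsBounded S := by
    refine isBounded_iff_forall_norm_le.mpr ⟨R.toReal, fun F hF => ?_⟩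
    rw [← toReal_enorm]
    exact ENNReal.toReal_mono hR (le_trans le_self_add hF)
  have hS_approx : ∀ ε > 0, ∃ V' : Submodule ℝ E, FiniteDimensional ℝ V' ∧
      ∀ F ∈ S, ∃ Q ∈ V', dist F Q < ε := by
    intro ε hε
    have hε' : ENNReal.ofReal ε ≠ 0 := (ENNReal.ofReal_pos.mpr hε).ne'
    obtain ⟨n, hn⟩ := (hw_top.eventually
      (lt_mem_nhds (ENNReal.div_lt_top hR hε'))).exists
    refine ⟨V n, inferInstance, fun F hF => ?_⟩
    have hFn : w n * infEDist F (V n : Set E) ≤ R :=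
      (le_iSup (fun m => w m * infEDist F (V m : Set E)) n).trans (le_add_self.trans hF)
    have hdist : infEDist F (V n : Set E) < ENNReal.ofReal ε := by
      by_contra! hge
      have hRlt : R < w n * ENNReal.ofReal ε :=
        (ENNReal.div_lt_iff (Or.inl hε') (Or.inl ENNReal.ofReal_ne_top)).mp hn
      exact (hRlt.trans_le (by gcongr)).not_ge hFn
    obtain ⟨Q, hQ, hFQ⟩ := infEDist_lt_iff.mp hdist
    exact ⟨Q, hQ, edist_lt_ofReal.mp hFQ⟩
  exact (totallyBounded_of_isBounded_of_approx_finiteDimensional hS_bdd hS_approx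
    ).isCompact_of_isClosed (isClosed_setOf_enorm_add_iSup_mul_infEDist_le _ _ hw R)

end Approximation

section LpGraph

variable {α : Type*} [MeasurableSpace α]

theorem Continuous.memLp_restrict_of_isCompact [TopologicalSpace α] [OpensMeasurableSpace α]
    {μ : Measure α} [IsFiniteMeasure μ] {B : Set α} (hB : IsCompact B) {f : α → ℝ}
    (hf : Continuous f) (p : ℝ≥0∞) : MemLp f p (μ.restrict B) := by
  obtain ⟨C, hC⟩ := hB.exists_bound_of_continuousOn hf.continuousOn
  -- `B` need not be measurable, so bound `f` on an open neighbourhood of `B` instead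
  set U : Set α := {x | ‖f x‖ < C + 1}
  have hU : IsOpen U := isOpen_lt hf.norm continuous_const
  have hBU : B ⊆ U := fun x hx => (hC x hx).trans_lt (lt_add_one C)
  have hbound : ∀ᵐ x ∂μ.restrict U, ‖f x‖ ≤ C + 1 :=
    ae_restrict_of_forall_mem hU.measurableSet fun x hx => le_of_lt hx
  exact (MemLp.of_bound hf.aestronglyMeasurable _ hbound).mono_measure
    (Measure.restrict_mono hBU le_rfl)

variable (μ : Measure α) (p : ℝ≥0∞) [Fact (1 ≤ p)]

def aeEqGraph : Submodule ℝ ((α → ℝ) × Lp ℝ p μ) where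
  carrier := {x | ⇑x.2 =ᵐ[μ] x.1}
  add_mem' {x y} (hx : ⇑x.2 =ᵐ[μ] x.1) (hy : ⇑y.2 =ᵐ[μ] y.1) :=
    (Lp.coeFn_add x.2 y.2).trans (hx.add hy)
  zero_mem' := Lp.coeFn_zero ℝ p μ
  smul_mem' a x (hx : ⇑x.2 =ᵐ[μ] x.1) := (Lp.coeFn_smul a x.2).trans (hx.const_smul a)

variable {μ p}

theorem iInf_eLpNorm_sub_eq_infEDist {G : Submodule ℝ ((α → ℝ) × Lp ℝ p μ)}
    (hG : G ≤ aeEqGraph μ p) {W : Submodule ℝ (α → ℝ)}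
    (hW : G.map (LinearMap.fst ℝ (α → ℝ) (Lp ℝ p μ)) = W) (F : Lp ℝ p μ) :
    ⨅ P : W, eLpNorm (⇑F - (P : α → ℝ)) p μ =
      Metric.infEDist F (G.map (LinearMap.snd ℝ (α → ℝ) (Lp ℝ p μ)) : Set (Lp ℝ p μ)) := by
  subst hW
  have hedist : ∀ x ∈ G, edist F x.2 = eLpNorm (⇑F - x.1) p μ := fun x hx => by
    have hx' : ⇑x.2 =ᵐ[μ] x.1 := hG hx
    rw [Lp.edist_def]
    exact eLpNorm_congr_ae (Filter.EventuallyEq.rfl.sub hx')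
  apply le_antisymm
  · refine Metric.le_infEDist.mpr ?_
    rintro _ ⟨x, hx, rfl⟩
    exact (iInf_le (fun P : G.map (LinearMap.fst ℝ (α → ℝ) (Lp ℝ p μ)) =>
      eLpNorm (⇑F - (P : α → ℝ)) p μ) ⟨x.1, Submodule.mem_map_of_mem hx⟩).trans
      (hedist x hx).ge
  · refine le_iInf ?_
    rintro ⟨_, x, hx, rfl⟩
    exact (Metric.infEDist_le_edist_of_mem (Submodule.mem_map_of_mem hx)).trans
      (hedist x hx).le

end LpGraph

namespace DiffusionSetting

variable (D : DiffusionSetting X)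

theorem finite_setOf_lam_le (N : ℝ) : {k | D.lam k ≤ N}.Finite := by
  have h := D.lam_tendsto.eventually_gt_atTop N
  rw [← Nat.cofinite_eq_atTop, Filter.eventually_cofinite] at h
  simpa only [not_lt] using h

variable {B : Set X} (p : ℝ≥0∞)

theorem memLp_phi (hB : IsCompact B) (k : ℕ) : MemLp (D.phi k) p (D.μ.restrict B) :=
  have := D.μ_prob
  (D.phi_cont k).memLp_restrict_of_isCompact hB p

variable [Fact (1 ≤ p)]

def polyGraph (hB : IsCompact B) (N : ℝ) : Submodule ℝ ((X → ℝ) × Lp ℝ p (D.μ.restrict B)) :=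
  Submodule.span ℝ
    ((fun k => (D.phi k, (D.memLp_phi p hB k).toLp (D.phi k))) '' {k | D.lam k ≤ N})

/-- `Π_N` as a subspace of `L_p(B)`. -/
def polyLp (hB : IsCompact B) (N : ℝ) : Submodule ℝ (Lp ℝ p (D.μ.restrict B)) :=
  (D.polyGraph p hB N).map (LinearMap.snd ℝ _ _)

instance (hB : IsCompact B) (N : ℝ) : FiniteDimensional ℝ (D.polyLp p hB N) :=
  haveI : FiniteDimensional ℝ (D.polyGraph p hB N) :=
    FiniteDimensional.span_of_finite ℝ ((D.finite_setOf_lam_le N).image _)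
  Module.Finite.map _ _

theorem E_eq_infEDist (hB : IsCompact B) (N : ℝ) (F : Lp ℝ p (D.μ.restrict B)) :
    D.E p B N F = Metric.infEDist F (D.polyLp p hB N : Set (Lp ℝ p (D.μ.restrict B))) := by
  refine iInf_eLpNorm_sub_eq_infEDist ?_ ?_ F
  · exact Submodule.span_le.mpr <| by rintro _ ⟨k, -, rfl⟩; exact (D.memLp_phi p hB k).coeFn_toLp
  · rw [polyGraph, Submodule.map_span, Set.image_image]
    rfl

theorem sobNorm_eq (hB : IsCompact B) (s : ℝ) (F : Lp ℝ p (D.μ.restrict B)) :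
    D.sobNorm s p B F = ‖F‖ₑ + ⨆ n : ℕ, ENNReal.ofReal ((n : ℝ) ^ s) *
      Metric.infEDist F (D.polyLp p hB n : Set (Lp ℝ p (D.μ.restrict B))) := by
  simp only [sobNorm, E_eq_infEDist D p hB, Lp.enorm_def]

end DiffusionSetting

theorem sobolev_ball_isCompact_general
    (D : DiffusionSetting X) (s : ℝ) (hs : 0 < s) (r : ℝ)
    (p : ℝ≥0∞) [Fact (1 ≤ p)] (x₀ : X) (t₀ : ℝ) (ht₀ : 0 < t₀) :
    IsCompact {F : Lp ℝ p (D.μ.restrict (D.cball x₀ t₀)) |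
      D.sobNorm s p (D.cball x₀ t₀) ⇑F ≤ ENNReal.ofReal r} := by
  have hB : IsCompact (D.cball x₀ t₀) := D.cball_compact x₀ t₀ ht₀
  simp only [D.sobNorm_eq p hB]
  exact isCompact_setOf_enorm_add_iSup_mul_infEDist_le _ (fun _ => ofReal_ne_top)
    (ENNReal.tendsto_ofReal_atTop.comp
      ((tendsto_rpow_atTop hs).comp tendsto_natCast_atTop_atTop)) ofReal_ne_top

/-- the Sobolev ball `W̄^s_r(L_p(B))` is a compact subset of `L_p(B)`. -/
theorem sobolev_ball_isCompact
    (D : DiffusionSetting X) (s : ℝ) (hs : 0 < s) (r : ℝ) (hr : 0 < r)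
    (p : ℝ≥0∞) [Fact (1 ≤ p)] (x₀ : X) (t₀ : ℝ) (ht₀ : 0 < t₀) :
    IsCompact {F : Lp ℝ p (D.μ.restrict (D.cball x₀ t₀)) |
      D.sobNorm s p (D.cball x₀ t₀) ⇑F ≤ ENNReal.ofReal r} :=
  sobolev_ball_isCompact_general D s hs r p x₀ t₀ ht₀
end
end

section
/- Let H be a low-pass filter, h := √H, g(t) := √(h(t/2)² − h(t)²), and let n ≥ 0 with N = 2^{n+1}. Define Φ_y := Σ_k h(λ_k) φ_k(y) φ_k and, for 0 ≤ j ≤ n, Ψ_{j,y} := Σ_k g(2^{−j}λ_k) φ_k(y) φ_k (finite sums, since h is supported in [0,1] and g(2^{−j}·) is supported in [0,2^{j+1}]). Let ν_{−1}, ν_0, …, ν_n be signed Borel measures on X with ∫ P dν_{−1} = ∫ P dμ for all P ∈ Π_{2a}, and ∫ P dν_j = ∫ P dμ for all P ∈ Π_{a·2^{j+1}} (0 ≤ j ≤ n), where a is the constant of the strong product assumption. Then for every f ∈ L²(X,μ), as elements of L²(X,μ): Σ_k H(λ_k/N) ⟨f,φ_k⟩ φ_k = ∫_X ⟨f,Φ_y⟩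 Φ_y dν_{−1}(y) + Σ_{j=0}^{n} ∫_X ⟨f,Ψ_{j,y}⟩ Ψ_{j,y} dν_j(y). -/
open MeasureTheory ENNReal

noncomputable section

variable {X : Type*} [TopologicalSpace X] [MeasurableSpace X] [BorelSpace X]

/-!
Write `f̂_k = ⟨f, φ_k⟩`. For a kernel `K_y = Σ_k c_k φ_k(y) φ_k` whose coefficients vanish once
`λ_k ≥ M`, the integrand `y ↦ ⟨f, K_y⟩ K_y(x)` is the product of two diffusion polynomials of
degree `< M`, hence lies in `Π_{aM}` by the strong product assumption. A measure exact on `Π_{aM}`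
therefore integrates it like `μ`, and orthonormality gives `Σ_k c_k² f̂_k φ_k(x)`. With
`c_k = h(λ_k)` and `c_k = g(λ_k / 2^j)` the squared coefficients telescope:
`h(t)² + Σ_{j ≤ n} g(t / 2^j)² = H(t / 2^{n+1})`.
-/

section LowPass

variable {H h g : ℝ → ℝ} {t : ℝ}

theorem IsLowPass.nonneg (hH : IsLowPass H) (ht : 0 ≤ t) : 0 ≤ H t := by
  rcases le_or_gt 1 t with h1 | h1
  · rw [hH.eq_zero t h1]
  · simpa [hH.eq_zero 1 le_rfl] using hH.antitoneOn ht (Set.mem_Ici.mpr zero_le_one) h1.le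

theorem IsLowPass.le_apply_div_two (hH : IsLowPass H) (ht : 0 ≤ t) : H t ≤ H (t / 2) :=
  hH.antitoneOn (by simp; linarith) ht (by linarith)

theorem IsLowPass.sq_of_eq_sqrt (hH : IsLowPass H) (hh : ∀ t, h t = √(H t)) (ht : 0 ≤ t) :
    h t ^ 2 = H t := by
  rw [hh, Real.sq_sqrt (hH.nonneg ht)]

theorem IsLowPass.eq_zero_of_eq_sqrt (hH : IsLowPass H) (hh : ∀ t, h t = √(H t)) (ht : 1 ≤ t) :
    h t = 0 := by
  rw [hh, hH.eq_zero t ht, Real.sqrt_zero]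

theorem IsLowPass.sq_of_eq_sqrt_sub (hH : IsLowPass H) (hh : ∀ t, h t = √(H t))
    (hg : ∀ t, g t = √(h (t / 2) ^ 2 - h t ^ 2)) (ht : 0 ≤ t) :
    g t ^ 2 = H (t / 2) - H t := by
  have ht2 : 0 ≤ t / 2 := by linarith
  rw [hg, hH.sq_of_eq_sqrt hh ht2, hH.sq_of_eq_sqrt hh ht,
    Real.sq_sqrt (sub_nonneg.mpr (hH.le_apply_div_two ht))]

theorem IsLowPass.eq_zero_of_eq_sqrt_sub (hH : IsLowPass H) (hh : ∀ t, h t = √(H t))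
    (hg : ∀ t, g t = √(h (t / 2) ^ 2 - h t ^ 2)) (ht : 2 ≤ t) : g t = 0 := by
  rw [hg, hH.eq_zero_of_eq_sqrt hh (by linarith), hH.eq_zero_of_eq_sqrt hh (by linarith)]
  simp

theorem IsLowPass.sq_add_sum_sq_div_two_pow (hH : IsLowPass H) (hh : ∀ t, h t = √(H t))
    (hg : ∀ t, g t = √(h (t / 2) ^ 2 - h t ^ 2)) (ht : 0 ≤ t) (m : ℕ) :
    h t ^ 2 + ∑ j ∈ Finset.range m, g (t / 2 ^ j) ^ 2 = H (t / 2 ^ m) := by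
  have hstep : ∀ j : ℕ, g (t / 2 ^ j) ^ 2 = H (t / 2 ^ (j + 1)) - H (t / 2 ^ j) := fun j => by
    rw [hH.sq_of_eq_sqrt_sub hh hg (by positivity), div_div, pow_succ]
  rw [Finset.sum_congr rfl fun j _ => hstep j, Finset.sum_range_sub (fun j => H (t / 2 ^ j)),
    hH.sq_of_eq_sqrt hh ht]
  simp

end LowPass

theorem two_rpow_neg_natCast_mul (j : ℕ) (t : ℝ) : (2 : ℝ) ^ (-(j : ℝ)) * t = t / 2 ^ j := by
  rw [Real.rpow_neg zero_le_two, Real.rpow_natCast, inv_mul_eq_div]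

namespace DiffusionSetting

variable (D : DiffusionSetting X)

theorem lam_nonneg (k : ℕ) : 0 ≤ D.lam k :=
  D.lam_zero ▸ D.lam_mono (Nat.zero_le k)

theorem memLp_two_phi (k : ℕ) : MemLp (D.phi k) 2 D.μ := by
  refine (memLp_two_iff_integrable_sq (D.phi_cont k).aestronglyMeasurable).mpr ?_
  refine Integrable.of_integral_ne_zero ?_
  simp [sq, D.phi_orthonormal k k]

theorem integral_sum_mul_sum (S : Finset ℕ) (A B : ℕ → ℝ) :
    ∫ y, (∑ k ∈ S, A k * D.phi k y) * (∑ l ∈ S, B l * D.phi l y) ∂D.μ = ∑ k ∈ S, A k * B k := by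
  have hint : ∀ k l, Integrable (fun y => A k * B l * (D.phi k y * D.phi l y)) D.μ := fun k l =>
    ((D.memLp_two_phi k).integrable_mul (D.memLp_two_phi l)).const_mul _
  simp_rw [Finset.sum_mul_sum, mul_mul_mul_comm]
  rw [integral_finsetSum _ fun k _ => integrable_finsetSum _ fun l _ => hint k l]
  refine Finset.sum_congr rfl fun k hk => ?_
  simp_rw [integral_finsetSum _ fun l _ => hint k l, integral_const_mul, D.phi_orthonormal]
  simp [hk]

theorem integral_mul_sum_phi {f : X → ℝ} (hf : MemLp f 2 D.μ) (S : Finset ℕ) (b : ℕ → ℝ) :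
    ∫ z, f z * ∑ k ∈ S, b k * D.phi k z ∂D.μ = ∑ k ∈ S, b k * ∫ z, f z * D.phi k z ∂D.μ := by
  have hint : ∀ k, Integrable (fun z => b k * (f z * D.phi k z)) D.μ := fun k =>
    (hf.integrable_mul (D.memLp_two_phi k)).const_mul _
  simp_rw [Finset.mul_sum, mul_left_comm (f _)]
  rw [integral_finsetSum _ fun k _ => hint k]
  simp_rw [integral_const_mul]

theorem sum_smul_phi_mem_Poly {M : ℝ} (S : Finset ℕ) {b : ℕ → ℝ}
    (hb : ∀ k, M ≤ D.lam k → b k = 0) : ∑ k ∈ S, b k • D.phi k ∈ D.Poly M := by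
  refine Submodule.sum_mem _ fun k _ => ?_
  by_cases hk : M ≤ D.lam k
  · simp [hb k hk]
  · exact Submodule.smul_mem _ _ (Submodule.subset_span ⟨k, (not_le.mp hk).le, rfl⟩)

theorem sInt_inner_kernel_mul_kernel {a M : ℝ} (hprod : StrongProduct D a) {ν : SignedMeasure X}
    (hν : D.IsExactOn ν (a * M)) {c : ℕ → ℝ} (hc : ∀ k, M ≤ D.lam k → c k = 0)
    {S : Finset ℕ} (hS : ∀ k ∉ S, M ≤ D.lam k) {f : X → ℝ} (hf : MemLp f 2 D.μ) (x : X) :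
    sInt ν (fun y => (∫ z, f z * (∑' k, c k * D.phi k y * D.phi k z) ∂D.μ) *
        ∑' k, c k * D.phi k y * D.phi k x) =
      ∑ k ∈ S, c k ^ 2 * (∫ z, f z * D.phi k z ∂D.μ) * D.phi k x := by
  set fh : ℕ → ℝ := fun k => ∫ z, f z * D.phi k z ∂D.μ
  have hker : ∀ y z, ∑' k, c k * D.phi k y * D.phi k z = ∑ k ∈ S, c k * D.phi k y * D.phi k z :=
    fun y z => tsum_eq_sum fun k hk => by simp [hc k (hS k hk)]
  set P : X → ℝ := ∑ k ∈ S, (c k * fh k) • D.phi k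
  set Q : X → ℝ := ∑ k ∈ S, (c k * D.phi k x) • D.phi k
  have hPQ : (fun y => (∫ z, f z * (∑' k, c k * D.phi k y * D.phi k z) ∂D.μ) *
      ∑' k, c k * D.phi k y * D.phi k x) = P * Q := by
    ext y
    simp only [hker, integral_mul_sum_phi D hf, P, Q, Pi.mul_apply, Finset.sum_apply,
      Pi.smul_apply, smul_eq_mul]
    congr 1 <;> exact Finset.sum_congr rfl fun k _ => by ring
  have hPQ_mem : P * Q ∈ D.Poly (a * M) :=
    hprod.2 M P Q (D.sum_smul_phi_mem_Poly S fun k hk => by simp [hc k hk])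
      (D.sum_smul_phi_mem_Poly S fun k hk => by simp [hc k hk])
  rw [hPQ, hν _ hPQ_mem]
  simp only [P, Q, Pi.mul_apply, Finset.sum_apply, Pi.smul_apply, smul_eq_mul]
  rw [D.integral_sum_mul_sum]
  exact Finset.sum_congr rfl fun k _ => by ring

end DiffusionSetting

/-- finite-scale wavelet identity: with `h = √H`, `g(t) = √(h(t/2)²−h(t)²)`,
wavelets `Φ_y = Σ_k h(λ_k)φ_k(y)φ_k`, `Ψ_{j,y} = Σ_k g(2^{-j}λ_k)φ_k(y)φ_k` and quadrature
measures `ν_{-1}, ν_0, …, ν_n` exact on `Π_{2a}` and `Π_{a·2^{j+1}}` respectively, one has,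
for `f ∈ L²(X,μ)` and `N = 2^{n+1}`, as elements of `L²(X,μ)`:
`Σ_k H(λ_k/N)⟨f,φ_k⟩φ_k = ∫⟨f,Φ_y⟩Φ_y dν_{-1}(y) + Σ_{j=0}^n ∫⟨f,Ψ_{j,y}⟩Ψ_{j,y} dν_j(y)`. -/
theorem wavelet_identity_finite_scale
    (D : DiffusionSetting X) (a : ℝ) (hprod : StrongProduct D a)
    (H : ℝ → ℝ) (hH : IsLowPass H)
    (h g : ℝ → ℝ) (hh : ∀ t : ℝ, h t = Real.sqrt (H t))
    (hg : ∀ t : ℝ, g t = Real.sqrt ((h (t / 2)) ^ 2 - (h t) ^ 2))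
    (n : ℕ)
    (Φ : X → X → ℝ) (hΦ : ∀ y x, Φ y x = ∑' k, h (D.lam k) * D.phi k y * D.phi k x)
    (Ψ : ℕ → X → X → ℝ)
    (hΨ : ∀ j y x, Ψ j y x = ∑' k, g ((2 : ℝ) ^ (-(j : ℝ)) * D.lam k) * D.phi k y * D.phi k x)
    (νneg : SignedMeasure X) (hνneg : D.IsExactOn νneg (2 * a))
    (ν : ℕ → SignedMeasure X) (hν : ∀ j : ℕ, D.IsExactOn (ν j) (a * 2 ^ (j + 1)))
    (f : X → ℝ) (hf : MemLp f 2 D.μ) :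
    (fun x => ∑' k, H (D.lam k / 2 ^ (n + 1)) * (∫ z, f z * D.phi k z ∂D.μ) * D.phi k x)
      =ᵐ[D.μ]
    (fun x => sInt νneg (fun y => (∫ z, f z * Φ y z ∂D.μ) * Φ y x) +
      ∑ j ∈ Finset.range (n + 1),
        sInt (ν j) (fun y => (∫ z, f z * Ψ j y z ∂D.μ) * Ψ j y x)) := by
  obtain ⟨K, hK⟩ := Filter.eventually_atTop.mp
    (D.lam_tendsto.eventually_ge_atTop ((2 : ℝ) ^ (n + 1)))
  have hS : ∀ {M : ℝ}, M ≤ 2 ^ (n + 1) → ∀ k ∉ Finset.range K, M ≤ D.lam k :=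
    fun hM k hk => hM.trans (hK k (by simpa using hk))
  have h_vanish : ∀ k, 2 ≤ D.lam k → h (D.lam k) = 0 :=
    fun k hk => hH.eq_zero_of_eq_sqrt hh (by linarith)
  have g_vanish : ∀ j k, 2 ^ (j + 1) ≤ D.lam k → g (D.lam k / 2 ^ j) = 0 :=
    fun j k hk => hH.eq_zero_of_eq_sqrt_sub hh hg <| by
      rwa [le_div_iff₀ (by positivity), ← pow_succ']
  refine Filter.Eventually.of_forall fun x => ?_
  simp only [hΦ, hΨ, two_rpow_neg_natCast_mul]
  rw [tsum_eq_sum (s := Finset.range K) fun k hk => by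
      rw [hH.eq_zero _ ((one_le_div (by positivity)).mpr (hS le_rfl k hk)), zero_mul, zero_mul],
    D.sInt_inner_kernel_mul_kernel hprod (M := 2) (by rwa [mul_comm]) h_vanish
      (hS (le_self_pow₀ one_le_two (Nat.succ_ne_zero n))) hf x,
    Finset.sum_congr rfl fun j hj => D.sInt_inner_kernel_mul_kernel hprod (hν j) (g_vanish j)
      (hS (pow_le_pow_right₀ one_le_two (by simpa using hj))) hf x,
    Finset.sum_comm, ← Finset.sum_add_distrib]
  refine Finset.sum_congr rfl fun k _ => ?_
  rw [← hH.sq_add_sum_sq_div_two_pow hh hg (D.lam_nonneg k) (n + 1)]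
  simp only [add_mul, Finset.sum_mul]
end
end
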